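/- The function G defined by G(y) = y + ε for y ≥ 1-ε, G(y) = (y/(1-ε))^{1-ε} for 0 < y < 1-ε, G(0) = 0, G(y) = -((1-ε)³(-y)^{-2} + ε)^{-1/2} for -1+ε < y < 0, and G(y) = y - ε for y ≤ ε-1, with 0 < ε < 1/3, is Hölder continuous with exponent 1-ε: there exists a constant C > 0 such that |G(y₁) - G(y₂)| ≤ C|y₁ - y₂|^{1-ε} for all y₁, y₂ with |y₁ - y₂| ≤ 1. -/
import Mathlib


noncomputable def Gmap (ε : ℝ) (y : ℝ) : ℝ :=
  if 1 - ε ≤ y then y + ε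
  else if 0 < y then (y / (1 - ε)) ^ (1 - ε)
  else if y = 0 then 0
  else if -1 + ε < y then -(((1 - ε) ^ 3 * ((-y) ^ 2)⁻¹ + ε) ^ (-(1 / 2 : ℝ)))
  else y - ε

/-- Subadditivity of rpow for exponents in [0,1]. -/
lemma rpow_subadd {x y p : ℝ} (hx : 0 ≤ x) (hy : 0 ≤ y) (hp : 0 ≤ p) (hp1 : p ≤ 1) :
    (x + y) ^ p ≤ x ^ p + y ^ p := by
  lift x to NNReal using hx
  lift y to NNReal using hy
  rw [← NNReal.coe_add, ← NNReal.coe_rpow, ← NNReal.coe_rpow, ← NNReal.coe_rpow,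
    ← NNReal.coe_add, NNReal.coe_le_coe]
  exact NNReal.rpow_add_le_add_rpow x y hp hp1

lemma self_le_rpow {t p : ℝ} (ht0 : 0 ≤ t) (ht1 : t ≤ 1) (hp0 : 0 < p) (hp1 : p ≤ 1) :
    t ≤ t ^ p := by
  rcases eq_or_lt_of_le ht0 with h | h
  · rw [← h, Real.zero_rpow hp0.ne']
  · calc t = t ^ (1 : ℝ) := (Real.rpow_one t).symm
      _ ≤ t ^ p := Real.rpow_le_rpow_of_exponent_ge h ht1 hp1

section pieces

variable {ε : ℝ} (hε : 0 < ε) (hε3 : ε < 1 / 3)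

lemma Gmap_high {y : ℝ} (h : 1 - ε ≤ y) : Gmap ε y = y + ε := by
  rw [Gmap, if_pos h]

include hε3 in
lemma Gmap_low {y : ℝ} (h : y ≤ ε - 1) : Gmap ε y = y - ε := by
  rw [Gmap, if_neg (by linarith), if_neg (by push_neg; linarith), if_neg (by linarith),
    if_neg (by push_neg; linarith)]

include hε hε3 in
lemma Gmap_mid {y : ℝ} (h0 : 0 ≤ y) (h1 : y ≤ 1 - ε) :
    Gmap ε y = (y / (1 - ε)) ^ (1 - ε) := by
  rcases h1.eq_or_lt with h | h
  · rw [Gmap, if_pos h.ge, h, div_self (by linarith), Real.one_rpow]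
    linarith
  · rcases h0.eq_or_lt with h' | h'
    · rw [Gmap, if_neg (by linarith), if_neg (by linarith), if_pos h'.symm, ← h', zero_div,
        Real.zero_rpow (by linarith)]
    · rw [Gmap, if_neg (by linarith), if_pos h']

include hε hε3 in
lemma Gmap_neg {y : ℝ} (h0 : ε - 1 ≤ y) (h1 : y ≤ 0) :
    Gmap ε y = -((-y) / Real.sqrt ((1 - ε) ^ 3 + ε * y ^ 2)) := by
  rcases h1.eq_or_lt with h | h
  · rw [Gmap, if_neg (by linarith), if_neg (by linarith), if_pos h, h]
    simp
  · rcases h0.eq_or_lt with h' | h'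
    · have hq : (0:ℝ) < 1 - ε := by linarith
      rw [Gmap_low hε3 h'.symm.le, ← h']
      have : (1 - ε) ^ 3 + ε * (ε - 1) ^ 2 = ((1 - ε)) ^ 2 := by ring
      rw [this, Real.sqrt_sq hq.le, neg_sub, div_self hq.ne']
      ring
    · have hy : y ≠ 0 := h.ne
      have hy2 : (0:ℝ) < y ^ 2 := by positivity
      have hN : (0:ℝ) < (1 - ε) ^ 3 + ε * y ^ 2 := by nlinarith [pow_pos (show (0:ℝ) < 1 - ε by linarith) 3]
      rw [Gmap, if_neg (by linarith), if_neg (by linarith), if_neg hy, if_pos (by linarith)]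
      have hX : (1 - ε) ^ 3 * ((-y) ^ 2)⁻¹ + ε = ((1 - ε) ^ 3 + ε * y ^ 2) / y ^ 2 := by
        field_simp
      rw [hX, Real.rpow_neg (by positivity), ← Real.sqrt_eq_rpow,
        Real.sqrt_div hN.le, Real.sqrt_sq_eq_abs, abs_of_neg h]
      rw [inv_div]

set_option maxHeartbeats 1000000 in
include hε hε3 in
lemma seg3 {a b : ℝ} (ha : ε - 1 ≤ a) (hab : a ≤ b) (hb : b ≤ 0) (h1 : b - a ≤ 1) :
    |Gmap ε b - Gmap ε a| ≤ 2 * (b - a) ^ (1 - ε) := by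
  have hq : (0:ℝ) < 1 - ε := by linarith
  rw [Gmap_neg hε hε3 (ha.trans hab) hb, Gmap_neg hε hε3 ha (hab.trans hb)]
  set c := (1 - ε) ^ 3 with hcdef
  have hc : (1/4:ℝ) ≤ c := by
    rw [hcdef]
    have h23 : (2/3:ℝ) ≤ 1 - ε := by linarith
    nlinarith [pow_le_pow_left₀ (by norm_num : (0:ℝ) ≤ 2/3) h23 3]
  have hc0 : (0:ℝ) < c := by linarith
  set s := -a with hs'
  set t := -b with ht'
  have ht : 0 ≤ t := by rw [ht']; linarith
  have hts : t ≤ s := by rw [hs', ht']; linarith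
  have hs : 0 ≤ s := le_trans ht hts
  have ea : a ^ 2 = s ^ 2 := by rw [hs']; ring
  have eb : b ^ 2 = t ^ 2 := by rw [ht']; ring
  rw [ea, eb]
  set A := Real.sqrt (c + ε * s ^ 2) with hA'
  set B := Real.sqrt (c + ε * t ^ 2) with hB'
  have hA0 : (0:ℝ) < c + ε * s ^ 2 := by positivity
  have hB0 : (0:ℝ) < c + ε * t ^ 2 := by positivity
  have hA : 0 < A := Real.sqrt_pos.2 hA0
  have hB : 0 < B := Real.sqrt_pos.2 hB0
  have hA2 : A ^ 2 = c + ε * s ^ 2 := Real.sq_sqrt hA0.le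
  have hB2 : B ^ 2 = c + ε * t ^ 2 := Real.sq_sqrt hB0.le
  have hAh : 1/2 ≤ A := by nlinarith
  have hBh : 1/2 ≤ B := by nlinarith
  have hkey : (s * B - t * A) * (s * B + t * A) = c * (s ^ 2 - t ^ 2) := by
    linear_combination s ^ 2 * hB2 - t ^ 2 * hA2
  have hmono : t * A ≤ s * B := by
    have hsq : (t * A) ^ 2 ≤ (s * B) ^ 2 := by
      have h9 : 0 ≤ c * (s ^ 2 - t ^ 2) :=
        mul_nonneg hc0.le (by nlinarith : (0:ℝ) ≤ s ^ 2 - t ^ 2)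
      nlinarith [hkey]
    exact (pow_le_pow_iff_left₀ (mul_nonneg ht hA.le) (mul_nonneg hs hB.le) two_ne_zero).1 hsq
  have hlip : s * B - t * A ≤ 2 * (s - t) * (A * B) := by
    rcases eq_or_lt_of_le hs with h0 | h0
    · have hs0 : s = 0 := h0.symm
      have ht0 : t = 0 := le_antisymm (hs0 ▸ hts) ht
      simp [hs0, ht0]
    · have hpos : 0 < s * B + t * A := by positivity
      have hAB : c ≤ A * B := by
        have e1 : c ≤ A ^ 2 := by nlinarith [mul_nonneg hε.le (sq_nonneg s)]
        have e2 : c ≤ B ^ 2 := by nlinarith [mul_nonneg hε.le (sq_nonneg t)]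
        have e3 : c ^ 2 ≤ (A * B) ^ 2 := by
          calc c ^ 2 = c * c := sq c
            _ ≤ A ^ 2 * B ^ 2 := mul_le_mul e1 e2 hc0.le (sq_nonneg A)
            _ = (A * B) ^ 2 := by ring
        exact (pow_le_pow_iff_left₀ hc0.le (mul_pos hA hB).le two_ne_zero).1 e3
      have hplus : (s + t) * (1/2) ≤ s * B + t * A := by
        have u1 : 0 ≤ s * (B - 1/2) := mul_nonneg hs (by linarith)
        have u2 : 0 ≤ t * (A - 1/2) := mul_nonneg ht (by linarith)
        nlinarith [u1, u2]
      have h6 : c * ((s + t) * (1/2)) ≤ (A * B) * (s * B + t * A) :=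
        mul_le_mul hAB hplus (by positivity) (by positivity)
      have h7 := mul_le_mul_of_nonneg_left h6 (by linarith : (0:ℝ) ≤ 2 * (s - t))
      have e : s * B - t * A = c * (s ^ 2 - t ^ 2) / (s * B + t * A) := by
        rw [eq_div_iff hpos.ne']; exact hkey
      rw [e, div_le_iff₀ hpos]
      calc c * (s ^ 2 - t ^ 2) = 2 * (s - t) * (c * ((s + t) * (1/2))) := by ring
        _ ≤ 2 * (s - t) * (A * B * (s * B + t * A)) := h7
        _ = 2 * (s - t) * (A * B) * (s * B + t * A) := by ring
  have hstep : s / A - t / B ≤ 2 * (s - t) := by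
    rw [div_sub_div _ _ hA.ne' hB.ne', div_le_iff₀ (mul_pos hA hB)]
    linarith [hlip]
  have hmono' : t / B ≤ s / A := by
    rw [div_le_div_iff₀ hB hA]; exact hmono
  have hnn : 0 ≤ -(t / B) - -(s / A) := by linarith
  rw [abs_of_nonneg hnn]
  calc -(t / B) - -(s / A) = s / A - t / B := by ring
    _ ≤ 2 * (s - t) := hstep
    _ = 2 * (b - a) := by rw [hs', ht']; ring
    _ ≤ 2 * (b - a) ^ (1 - ε) := by
        have := self_le_rpow (p := 1 - ε) (by linarith : (0:ℝ) ≤ b - a) h1 (by linarith) (by linarith)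
        linarith

include hε hε3 in
lemma seg1 {a b : ℝ} (ha : 1 - ε ≤ a) (hab : a ≤ b) (h1 : b - a ≤ 1) :
    |Gmap ε b - Gmap ε a| ≤ 2 * (b - a) ^ (1 - ε) := by
  rw [Gmap_high (ha.trans hab), Gmap_high ha]
  have h2 : b + ε - (a + ε) = b - a := by ring
  rw [h2, abs_of_nonneg (by linarith)]
  have := self_le_rpow (p := 1 - ε) (by linarith) h1 (by linarith) (by linarith)
  linarith

include hε hε3 in
lemma seg4 {a b : ℝ} (hb : b ≤ ε - 1) (hab : a ≤ b) (h1 : b - a ≤ 1) :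
    |Gmap ε b - Gmap ε a| ≤ 2 * (b - a) ^ (1 - ε) := by
  rw [Gmap_low hε3 hb, Gmap_low hε3 (hab.trans hb)]
  have h2 : b - ε - (a - ε) = b - a := by ring
  rw [h2, abs_of_nonneg (by linarith)]
  have := self_le_rpow (p := 1 - ε) (by linarith) h1 (by linarith) (by linarith)
  linarith

include hε hε3 in
lemma seg2 {a b : ℝ} (ha : 0 ≤ a) (hab : a ≤ b) (hb : b ≤ 1 - ε) :
    |Gmap ε b - Gmap ε a| ≤ 2 * (b - a) ^ (1 - ε) := by
  have hq : (0:ℝ) < 1 - ε := by linarith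
  rw [Gmap_mid hε hε3 (ha.trans hab) hb, Gmap_mid hε hε3 ha (hab.trans hb)]
  have hmono : (a / (1 - ε)) ^ (1 - ε) ≤ (b / (1 - ε)) ^ (1 - ε) :=
    Real.rpow_le_rpow (div_nonneg ha hq.le) (by gcongr) (by linarith)
  rw [abs_of_nonneg (by linarith)]
  have hsplit : b / (1 - ε) = a / (1 - ε) + (b - a) / (1 - ε) := by ring
  have hsub : (b / (1 - ε)) ^ (1 - ε) ≤
      (a / (1 - ε)) ^ (1 - ε) + ((b - a) / (1 - ε)) ^ (1 - ε) := by
    rw [hsplit]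
    exact rpow_subadd (div_nonneg ha hq.le) (div_nonneg (by linarith) hq.le) (by linarith) (by linarith)
  have hdiv : ((b - a) / (1 - ε)) ^ (1 - ε) = (b - a) ^ (1 - ε) / (1 - ε) ^ (1 - ε) :=
    Real.div_rpow (by linarith) hq.le _
  have hden : (1/2:ℝ) ≤ (1 - ε) ^ (1 - ε) := by
    have h2 : (1 - ε) ^ (1:ℝ) ≤ (1 - ε) ^ (1 - ε) :=
      Real.rpow_le_rpow_of_exponent_ge hq (by linarith) (by linarith)
    rw [Real.rpow_one] at h2
    linarith
  have hfin : (b - a) ^ (1 - ε) / (1 - ε) ^ (1 - ε) ≤ 2 * (b - a) ^ (1 - ε) := by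
    rw [div_le_iff₀ (by linarith)]
    have hnn : (0:ℝ) ≤ (b - a) ^ (1 - ε) := Real.rpow_nonneg (by linarith) _
    nlinarith [mul_nonneg hnn (by linarith : (0:ℝ) ≤ (1 - ε) ^ (1 - ε) - 1/2)]
  linarith [hsub, hfin, hdiv.le, hdiv.ge]

set_option maxHeartbeats 1000000 in
include hε hε3 in
lemma main_le {y₁ y₂ : ℝ} (h12 : y₁ ≤ y₂) (h1 : y₂ - y₁ ≤ 1) :
    |Gmap ε y₂ - Gmap ε y₁| ≤ 8 * (y₂ - y₁) ^ (1 - ε) := by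
  set c1 := min y₂ (max y₁ (ε - 1)) with hc1
  set c2 := min y₂ (max y₁ 0) with hc2
  set c3 := min y₂ (max y₁ (1 - ε)) with hc3
  have he1 : ε - 1 ≤ (0:ℝ) := by linarith
  have he2 : (0:ℝ) ≤ 1 - ε := by linarith
  have o1 : y₁ ≤ c1 := le_min h12 (le_max_left _ _)
  have o2 : c1 ≤ c2 := min_le_min le_rfl (max_le_max le_rfl he1)
  have o3 : c2 ≤ c3 := min_le_min le_rfl (max_le_max le_rfl he2)
  have o4 : c3 ≤ y₂ := min_le_left _ _
  have o14 : c1 ≤ y₂ := (o2.trans o3).trans o4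
  have o24 : c2 ≤ y₂ := o3.trans o4
  have o13 : y₁ ≤ c2 := o1.trans o2
  have o12 : y₁ ≤ c3 := o13.trans o3
  have hrnn : (0:ℝ) ≤ (y₂ - y₁) ^ (1 - ε) := Real.rpow_nonneg (by linarith) _
  have lift : ∀ u v : ℝ, y₁ ≤ u → u ≤ v → v ≤ y₂ →
      |Gmap ε v - Gmap ε u| ≤ 2 * (v - u) ^ (1 - ε) →
      |Gmap ε v - Gmap ε u| ≤ 2 * (y₂ - y₁) ^ (1 - ε) := by
    intro u v hu huv hv h
    refine h.trans ?_
    have h2 : (v - u) ^ (1 - ε) ≤ (y₂ - y₁) ^ (1 - ε) :=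
      Real.rpow_le_rpow (by linarith) (by linarith) (by linarith)
    linarith
  have T1 : |Gmap ε c1 - Gmap ε y₁| ≤ 2 * (y₂ - y₁) ^ (1 - ε) := by
    rcases le_or_gt y₁ (ε - 1) with h | h
    · refine lift _ _ le_rfl o1 o14 ?_
      have hb : c1 ≤ ε - 1 := by rw [hc1, max_eq_right h]; exact min_le_right _ _
      exact seg4 hε hε3 hb o1 (by linarith)
    · have e : c1 = y₁ := by rw [hc1, max_eq_left h.le, min_eq_right h12]
      rw [e, sub_self, abs_zero]
      linarith
  have T2 : |Gmap ε c2 - Gmap ε c1| ≤ 2 * (y₂ - y₁) ^ (1 - ε) := by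
    rcases le_or_gt y₂ (ε - 1) with h | h
    · have e1 : c1 = y₂ := by
        rw [hc1]; exact min_eq_left (h.trans (le_max_right _ _))
      have e2 : c2 = y₂ := by
        rw [hc2]; exact min_eq_left ((h.trans he1).trans (le_max_right _ _))
      rw [e1, e2, sub_self, abs_zero]
      linarith
    · rcases le_or_gt y₁ 0 with h' | h'
      · have ha1 : ε - 1 ≤ c1 := le_min h.le (le_max_right _ _)
        have hb2 : c2 ≤ 0 := by rw [hc2, max_eq_right h']; exact min_le_right _ _
        exact lift _ _ o1 o2 o24 (seg3 hε hε3 ha1 o2 hb2 (by linarith))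
      · have e1 : c1 = y₁ := by
          rw [hc1, max_eq_left (by linarith), min_eq_right h12]
        have e2 : c2 = y₁ := by rw [hc2, max_eq_left h'.le, min_eq_right h12]
        rw [e1, e2, sub_self, abs_zero]
        linarith
  have T3 : |Gmap ε c3 - Gmap ε c2| ≤ 2 * (y₂ - y₁) ^ (1 - ε) := by
    rcases le_or_gt y₂ 0 with h | h
    · have e2 : c2 = y₂ := by
        rw [hc2]; exact min_eq_left (h.trans (le_max_right _ _))
      have e3 : c3 = y₂ := by
        rw [hc3]; exact min_eq_left ((h.trans he2).trans (le_max_right _ _))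
      rw [e2, e3, sub_self, abs_zero]
      linarith
    · rcases le_or_gt y₁ (1 - ε) with h' | h'
      · have ha2 : 0 ≤ c2 := le_min h.le (le_max_right _ _)
        have hb3 : c3 ≤ 1 - ε := by rw [hc3, max_eq_right h']; exact min_le_right _ _
        exact lift _ _ o13 o3 o4 (seg2 hε hε3 ha2 o3 hb3)
      · have e2 : c2 = y₁ := by
          rw [hc2, max_eq_left (by linarith), min_eq_right h12]
        have e3 : c3 = y₁ := by rw [hc3, max_eq_left h'.le, min_eq_right h12]
        rw [e2, e3, sub_self, abs_zero]
        linarith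
  have T4 : |Gmap ε y₂ - Gmap ε c3| ≤ 2 * (y₂ - y₁) ^ (1 - ε) := by
    rcases le_or_gt y₂ (1 - ε) with h | h
    · have e3 : c3 = y₂ := by
        rw [hc3]; exact min_eq_left (h.trans (le_max_right _ _))
      rw [e3, sub_self, abs_zero]
      linarith
    · have ha3 : 1 - ε ≤ c3 := le_min h.le (le_max_right _ _)
      exact lift _ _ o12 o4 le_rfl (seg1 hε hε3 ha3 o4 (by linarith))
  have tri : |Gmap ε y₂ - Gmap ε y₁| ≤ |Gmap ε y₂ - Gmap ε c3| + |Gmap ε c3 - Gmap ε c2|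
      + |Gmap ε c2 - Gmap ε c1| + |Gmap ε c1 - Gmap ε y₁| := by
    have e : Gmap ε y₂ - Gmap ε y₁ = (Gmap ε y₂ - Gmap ε c3) + ((Gmap ε c3 - Gmap ε c2)
        + ((Gmap ε c2 - Gmap ε c1) + (Gmap ε c1 - Gmap ε y₁))) := by ring
    rw [e]
    refine (abs_add_le _ _).trans ?_
    have t2 := abs_add_le (Gmap ε c3 - Gmap ε c2) ((Gmap ε c2 - Gmap ε c1) + (Gmap ε c1 - Gmap ε y₁))
    have t3 := abs_add_le (Gmap ε c2 - Gmap ε c1) (Gmap ε c1 - Gmap ε y₁)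
    linarith
  linarith [T1, T2, T3, T4, tri]

end pieces

theorem stmt_11 (ε : ℝ) (hε : 0 < ε) (hε3 : ε < 1 / 3) :
    ∃ C : ℝ, 0 < C ∧ ∀ y₁ y₂ : ℝ, |y₁ - y₂| ≤ 1 →
      |Gmap ε y₁ - Gmap ε y₂| ≤ C * |y₁ - y₂| ^ (1 - ε) := by
  refine ⟨8, by norm_num, ?_⟩
  intro y₁ y₂ h
  rcases le_total y₁ y₂ with h' | h'
  · have e : |y₁ - y₂| = y₂ - y₁ := by rw [abs_sub_comm]; exact abs_of_nonneg (by linarith)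
    rw [e] at h ⊢
    rw [abs_sub_comm]
    exact main_le hε hε3 h' h
  · have e : |y₁ - y₂| = y₁ - y₂ := abs_of_nonneg (by linarith)
    rw [e] at h ⊢
    exact main_le hε hε3 h' h
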